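/- If the greedy leftmost path-building algorithm on G(n,p₁) stops when the set U of unvisited vertices has size |U| = 2 log n / p₁, then with high probability the smallest index j₁ of a vertex in U satisfies j₁ ≥ n − 4 log n / p₁, and the resulting Hamilton cycle H obtained by appending any Hamilton path through U satisfies ι(H) ≤ Σ_{j≤j₀} α_j + |U|·(n − j₁), where α_j counts later-visited vertices with smaller label than v_j. -/

import Mathlib

open Filter Topology

attribute [local instance] Classical.propDecidable

noncomputable def erWeight (n : ℕ) (p : ℝ) (X : Sym2 (Fin n) → Bool) : ℝ :=
  ∏ e : Sym2 (Fin n),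
    if e.IsDiag then (if X e then 0 else 1) else (if X e then p else 1 - p)

noncomputable def bP (n : ℕ) (p : ℝ) (A : (Sym2 (Fin n) → Bool) → Prop) : ℝ :=
  ∑ X : Sym2 (Fin n) → Bool, erWeight n p X * (if A X then 1 else 0)

/-- The next vertex of the greedy walk: the unvisited neighbour of `cur` of
smallest index, if any. -/
noncomputable def nextV {n : ℕ} (X : Sym2 (Fin n) → Bool) (cur : Fin n)
    (vis : Finset (Fin n)) : Option (Fin n) :=
  if h : (Finset.univ.filter (fun t => t ∉ vis ∧ X s(cur, t))).Nonempty
  then some ((Finset.univ.filter (fun t => t ∉ vis ∧ X s(cur, t))).min' h)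
  else none

/-- The state (current vertex, visited set) of the greedy leftmost walk started
at the vertex of index `0`, after `j` steps; `none` if the walk has died. -/
noncomputable def gstate {n : ℕ} (X : Sym2 (Fin n) → Bool) :
    ℕ → Option (Fin n × Finset (Fin n))
  | 0 => if h : 0 < n then some (⟨0, h⟩, {⟨0, h⟩}) else none
  | (j + 1) => (gstate X j).bind (fun s =>
      (nextV X s.1 s.2).map (fun v => (v, insert v s.2)))

/-- `α_j(σ)`: the number of positions `k > j` whose entry `σ k` is smaller
than `σ j` (later-visited vertices with smaller label). -/
noncomputable def alphaInv {n : ℕ} (σ : Equiv.Perm (Fin n)) (j : Fin n) : ℕ :=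
  (Finset.univ.filter (fun k => j < k ∧ σ k < σ j)).card

/-- The number of inversions `ι(σ) = Σ_j α_j(σ)`. -/
noncomputable def iotaInv {n : ℕ} (σ : Equiv.Perm (Fin n)) : ℕ :=
  ∑ j, alphaInv σ j

/-!
The edges of `G(n, p)` are revealed only as the greedy walk inspects them. Each step reveals the
edge it takes and the absence of the edges to the smaller unvisited vertices it skips, and
following a given trajectory is exactly the event that these edges are in their revealed states;
so any further set of `k` uninspected edges is absent with an independent probability
`(1 - p) ^ k`. This bounds the two ways the stopped walk can fail: it is stuck at step `i` only
if the `n - i - 1` edges to unvisited vertices are absent, and a vertex `v` is still unvisited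
after `j₀` steps only if it was skipped at each of the at least `j₀ - v` steps that moved to a
larger label. With `|U| = ⌈2 log n / p⌉` each failure has probability at most
`n e^{-2 log n} = 1/n`. Otherwise every label in `U` is at least `n - 4 log n / p`, so each of the
last `|U|` positions of the Hamilton cycle accounts for at most `n - j₁` inversions.
-/

section ErdosRenyi

open Finset

variable {n : ℕ} {p : ℝ}

noncomputable def edgeWeight (n : ℕ) (p : ℝ) (e : Sym2 (Fin n)) (b : Bool) : ℝ :=
  if e.IsDiag then (if b then 0 else 1) else (if b then p else 1 - p)

lemma erWeight_eq_prod (X : Sym2 (Fin n) → Bool) :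
    erWeight n p X = ∏ e, edgeWeight n p e (X e) := rfl

lemma edgeWeight_nonneg (hp0 : 0 ≤ p) (hp1 : p ≤ 1) (e : Sym2 (Fin n)) (b : Bool) :
    0 ≤ edgeWeight n p e b := by
  unfold edgeWeight; split_ifs <;> linarith

lemma edgeWeight_true_add_false (e : Sym2 (Fin n)) :
    edgeWeight n p e true + edgeWeight n p e false = 1 := by
  by_cases h : e.IsDiag <;> simp [edgeWeight, h]

lemma erWeight_nonneg (hp0 : 0 ≤ p) (hp1 : p ≤ 1) (X : Sym2 (Fin n) → Bool) :
    0 ≤ erWeight n p X :=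
  prod_nonneg fun e _ => edgeWeight_nonneg hp0 hp1 e _

lemma bP_forall_eq_prod (Q : Sym2 (Fin n) → Bool → Prop) :
    bP n p (fun X => ∀ e, Q e (X e)) =
      ∏ e, ∑ b, if Q e b then edgeWeight n p e b else 0 := by
  rw [Fintype.prod_sum]
  refine sum_congr rfl fun X _ => ?_
  rw [erWeight_eq_prod]
  by_cases h : ∀ e, Q e (X e)
  · rw [if_pos h, mul_one]
    exact prod_congr rfl fun e _ => (if_pos (h e)).symm
  · obtain ⟨e, he⟩ := not_forall.mp h
    rw [if_neg h, mul_zero]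
    exact (prod_eq_zero (mem_univ e) (if_neg he)).symm

lemma bP_true : bP n p (fun _ => True) = 1 := by
  simpa [edgeWeight_true_add_false] using bP_forall_eq_prod (n := n) (p := p) fun _ _ => True

lemma bP_nonneg (hp0 : 0 ≤ p) (hp1 : p ≤ 1) (A : (Sym2 (Fin n) → Bool) → Prop) :
    0 ≤ bP n p A :=
  sum_nonneg fun X _ => mul_nonneg (erWeight_nonneg hp0 hp1 X) (by split_ifs <;> norm_num)

lemma bP_mono (hp0 : 0 ≤ p) (hp1 : p ≤ 1) {A B : (Sym2 (Fin n) → Bool) → Prop}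
    (h : ∀ X, A X → B X) : bP n p A ≤ bP n p B := by
  refine sum_le_sum fun X _ => mul_le_mul_of_nonneg_left ?_ (erWeight_nonneg hp0 hp1 X)
  by_cases hA : A X
  · simp [hA, h X hA]
  · simp only [hA, if_false]; split_ifs <;> norm_num

lemma bP_le_one (hp0 : 0 ≤ p) (hp1 : p ≤ 1) (A : (Sym2 (Fin n) → Bool) → Prop) :
    bP n p A ≤ 1 :=
  bP_true (n := n) (p := p) ▸ bP_mono hp0 hp1 fun _ _ => trivial

lemma bP_add_bP_not (A : (Sym2 (Fin n) → Bool) → Prop) :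
    bP n p A + bP n p (fun X => ¬ A X) = 1 := by
  rw [← bP_true (n := n) (p := p), bP, bP, bP, ← sum_add_distrib]
  refine sum_congr rfl fun X _ => ?_
  by_cases h : A X <;> simp [h]

lemma bP_le_sum {ι : Type*} (hp0 : 0 ≤ p) (hp1 : p ≤ 1) (s : Finset ι)
    {A : (Sym2 (Fin n) → Bool) → Prop} (B : ι → (Sym2 (Fin n) → Bool) → Prop)
    (h : ∀ X, A X → ∃ i ∈ s, B i X) :
    bP n p A ≤ ∑ i ∈ s, bP n p (B i) := by
  unfold bP
  rw [sum_comm]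
  refine sum_le_sum fun X _ => ?_
  rw [← mul_sum]
  refine mul_le_mul_of_nonneg_left ?_ (erWeight_nonneg hp0 hp1 X)
  by_cases hA : A X
  · obtain ⟨i, hi, hBi⟩ := h X hA
    rw [if_pos hA]
    calc (1 : ℝ) = if B i X then 1 else 0 := (if_pos hBi).symm
      _ ≤ _ := single_le_sum (f := fun j => if B j X then (1 : ℝ) else 0)
          (fun j _ => by split_ifs <;> norm_num) hi
  · rw [if_neg hA]
    exact sum_nonneg fun j _ => by split_ifs <;> norm_num

lemma bP_or_le (hp0 : 0 ≤ p) (hp1 : p ≤ 1) (A B : (Sym2 (Fin n) → Bool) → Prop) :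
    bP n p (fun X => A X ∨ B X) ≤ bP n p A + bP n p B := by
  simpa using bP_le_sum hp0 hp1 univ (fun b : Bool => if b then A else B)
    fun X hX => hX.elim (fun h => ⟨true, by simpa using h⟩) fun h => ⟨false, by simpa using h⟩

lemma sum_bP_le_one {ι : Type*} (hp0 : 0 ≤ p) (hp1 : p ≤ 1) (s : Finset ι)
    (B : ι → (Sym2 (Fin n) → Bool) → Prop)
    (h : ∀ X, ∀ i ∈ s, ∀ j ∈ s, B i X → B j X → i = j) :
    ∑ i ∈ s, bP n p (B i) ≤ 1 := by
  rw [← bP_true (n := n) (p := p)]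
  unfold bP
  rw [sum_comm]
  refine sum_le_sum fun X _ => ?_
  rw [← mul_sum, if_pos trivial]
  refine mul_le_mul_of_nonneg_left ?_ (erWeight_nonneg hp0 hp1 X)
  simp only [sum_boole, Nat.cast_le_one]
  exact card_le_one.mpr fun i hi j hj =>
    h X i (mem_filter.1 hi).1 j (mem_filter.1 hj).1 (mem_filter.1 hi).2 (mem_filter.1 hj).2

lemma bP_exists_le_of_exclusive {ι : Type*} (hp0 : 0 ≤ p) (hp1 : p ≤ 1) {q : ℝ} (hq : 0 ≤ q)
    (s : Finset ι) (F G : ι → (Sym2 (Fin n) → Bool) → Prop)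
    (hexcl : ∀ X, ∀ i ∈ s, ∀ j ∈ s, F i X → F j X → i = j)
    (hG : ∀ i ∈ s, bP n p (fun X => F i X ∧ G i X) ≤ q * bP n p (F i)) :
    bP n p (fun X => ∃ i ∈ s, F i X ∧ G i X) ≤ q :=
  calc _ ≤ ∑ i ∈ s, bP n p (fun X => F i X ∧ G i X) := bP_le_sum hp0 hp1 s _ (fun _ h => h)
    _ ≤ ∑ i ∈ s, q * bP n p (F i) := sum_le_sum hG
    _ = q * ∑ i ∈ s, bP n p (F i) := (mul_sum ..).symm
    _ ≤ q * 1 := mul_le_mul_of_nonneg_left (sum_bP_le_one hp0 hp1 s F hexcl) hq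
    _ = q := mul_one q

end ErdosRenyi

section Constraints

open Finset

variable {n : ℕ} {p : ℝ}

def Satisfies (c : Sym2 (Fin n) → Option Bool) (X : Sym2 (Fin n) → Bool) : Prop :=
  ∀ e b, c e = some b → X e = b

lemma bP_satisfies (c : Sym2 (Fin n) → Option Bool) :
    bP n p (Satisfies c) = ∏ e, (c e).elim 1 (edgeWeight n p e) := by
  refine (bP_forall_eq_prod fun e v => ∀ b, c e = some b → v = b).trans
    (prod_congr rfl fun e _ => ?_)
  cases c e with
  | none => simpa using edgeWeight_true_add_false e
  | some b => cases b <;> simp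

lemma bP_satisfies_and_absent (c : Sym2 (Fin n) → Option Bool) {D : Finset (Sym2 (Fin n))}
    (hD : ∀ e ∈ D, ¬ e.IsDiag ∧ c e = none) :
    bP n p (fun X => Satisfies c X ∧ ∀ e ∈ D, X e = false) =
      bP n p (Satisfies c) * (1 - p) ^ #D := by
  have hext : (fun X => Satisfies c X ∧ ∀ e ∈ D, X e = false) =
      Satisfies fun e => if e ∈ D then some false else c e := by
    funext X
    refine propext ⟨fun ⟨hc, hD'⟩ e b hb => ?_, fun h => ⟨fun e b hb => ?_, fun e he => ?_⟩⟩
    · dsimp only at hb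
      split_ifs at hb with he
      · rw [← Option.some_inj.mp hb, hD' e he]
      · exact hc e b hb
    · have he : e ∉ D := fun he => by simp [(hD e he).2] at hb
      exact h e b (by simpa [he] using hb)
    · exact h e false (if_pos he)
  rw [hext, bP_satisfies, bP_satisfies, ← prod_const, ← Fintype.prod_ite_mem D (fun _ => 1 - p),
    ← prod_mul_distrib]
  refine prod_congr rfl fun e _ => ?_
  by_cases he : e ∈ D
  · simp [he, (hD e he).2, edgeWeight, (hD e he).1]
  · simp [he]

end Constraints

section GreedyWalk

open Finset

variable {n : ℕ} {X : Sym2 (Fin n) → Bool}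

lemma nextV_eq_some_iff {cur w : Fin n} {vis : Finset (Fin n)} :
    nextV X cur vis = some w ↔
      w ∉ vis ∧ X s(cur, w) ∧ ∀ t ∉ vis, t < w → X s(cur, t) = false := by
  unfold nextV
  split_ifs with h
  · rw [Option.some_inj, min'_eq_iff]
    simp only [mem_filter, mem_univ, true_and, and_assoc]
    refine and_congr_right fun _ => and_congr_right fun _ =>
      ⟨fun H t ht hlt => ?_, fun H t ⟨ht, hX⟩ => ?_⟩
    · by_contra hX
      exact absurd (H t ⟨ht, by simpa using hX⟩) (not_le.2 hlt)
    · by_contra hlt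
      exact absurd (H t ht (not_le.1 hlt)) (by simpa using hX)
  · simp only [false_iff]
    exact fun ⟨hw, hX, _⟩ => h ⟨w, by simp [hw, hX]⟩

lemma nextV_eq_none_iff {cur : Fin n} {vis : Finset (Fin n)} :
    nextV X cur vis = none ↔ ∀ t ∉ vis, X s(cur, t) = false := by
  unfold nextV
  split_ifs with h
  · obtain ⟨t, ht⟩ := h
    simp only [mem_filter, mem_univ, true_and] at ht
    simpa using ⟨t, ht.1, ht.2⟩
  · simpa [filter_nonempty_iff] using h

lemma nextV_insert_of_ne {cur v w : Fin n} {vis : Finset (Fin n)}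
    (h : nextV X cur vis = some w) (hvw : v ≠ w) : nextV X cur (insert v vis) = some w := by
  obtain ⟨hw, hX, hskip⟩ := nextV_eq_some_iff.mp h
  exact nextV_eq_some_iff.mpr
    ⟨by simp [hvw.symm, hw], hX, fun t ht => hskip t fun h => ht (mem_insert_of_mem h)⟩

/-- The greedy leftmost walk of `gstate` run as if the vertices of `A` were already visited. -/
noncomputable def greedyWalk (A : Finset (Fin n)) (X : Sym2 (Fin n) → Bool) :
    ℕ → Option (Fin n × Finset (Fin n))
  | 0 => if h : 0 < n then some (⟨0, h⟩, insert ⟨0, h⟩ A) else none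
  | j + 1 => (greedyWalk A X j).bind fun s =>
      (nextV X s.1 s.2).map fun v => (v, insert v s.2)

lemma gstate_eq_greedyWalk (j : ℕ) : gstate X j = greedyWalk ∅ X j := by
  induction j with
  | zero => rfl
  | succ j ih => simp only [gstate, greedyWalk, ih]

lemma greedyWalk_succ_eq_some_iff {A : Finset (Fin n)} {j : ℕ} {st' : Fin n × Finset (Fin n)} :
    greedyWalk A X (j + 1) = some st' ↔
      ∃ st, greedyWalk A X j = some st ∧ nextV X st.1 st.2 = some st'.1 ∧
        st'.2 = insert st'.1 st.2 := by
  simp only [greedyWalk, Option.bind_eq_some_iff, Option.map_eq_some_iff]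
  constructor
  · rintro ⟨st, hst, v, hv, rfl⟩
    exact ⟨st, hst, hv, rfl⟩
  · rintro ⟨st, hst, hv, h2⟩
    exact ⟨st, hst, st'.1, hv, Prod.ext rfl h2.symm⟩

lemma exists_nextV_eq_none_of_greedyWalk_eq_none {A : Finset (Fin n)} {m : ℕ} (hn : 0 < n)
    (h : greedyWalk A X m = none) :
    ∃ i < m, ∃ st, greedyWalk A X i = some st ∧ nextV X st.1 st.2 = none := by
  induction m with
  | zero => simp [greedyWalk, hn] at h
  | succ m ih =>
    rcases hst : greedyWalk A X m with _ | st
    · obtain ⟨i, hi, hst'⟩ := ih hst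
      exact ⟨i, by omega, hst'⟩
    · refine ⟨m, by omega, st, hst, ?_⟩
      simpa [greedyWalk, hst] using h

def visitedAlong (A : Finset (Fin n)) (f : ℕ → Fin n) (i : ℕ) : Finset (Fin n) :=
  A ∪ (range (i + 1)).image f

def Follows (A : Finset (Fin n)) (f : ℕ → Fin n) (j : ℕ) (X : Sym2 (Fin n) → Bool) : Prop :=
  ∀ i ≤ j, greedyWalk A X i = some (f i, visitedAlong A f i)

def IsAdmissible (A : Finset (Fin n)) (f : ℕ → Fin n) (j : ℕ) : Prop :=
  (f 0 : ℕ) = 0 ∧ ∀ i < j, f (i + 1) ∉ visitedAlong A f i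

section Trajectory

variable {A : Finset (Fin n)} {f f' : ℕ → Fin n} {i j : ℕ}

lemma visitedAlong_zero : visitedAlong A f 0 = insert (f 0) A := by
  simp [visitedAlong]

lemma visitedAlong_succ : visitedAlong A f (i + 1) = insert (f (i + 1)) (visitedAlong A f i) := by
  rw [visitedAlong, visitedAlong, range_add_one, image_insert, union_insert]

lemma mem_visitedAlong {k : ℕ} (hk : k ≤ i) : f k ∈ visitedAlong A f i :=
  mem_union_right _ (mem_image_of_mem f (mem_range.mpr (by omega)))

lemma visitedAlong_insert {v : Fin n} :
    visitedAlong (insert v A) f i = insert v (visitedAlong A f i) := by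
  simp [visitedAlong, insert_union]

lemma visitedAlong_mono {i' : ℕ} (h : i ≤ i') : visitedAlong A f i ⊆ visitedAlong A f i' :=
  union_subset_union_right (image_subset_image (range_subset_range.mpr (by omega)))

lemma visitedAlong_congr (h : ∀ k ≤ i, f k = f' k) : visitedAlong A f i = visitedAlong A f' i := by
  unfold visitedAlong
  congr 1
  exact image_congr fun k hk => h k (by simp at hk; omega)

lemma card_visitedAlong_empty_le : #(visitedAlong ∅ f i) ≤ i + 1 := by
  simpa [visitedAlong] using card_image_le (s := range (i + 1)) (f := f)

lemma IsAdmissible.eq_of_apply_eq (hf : IsAdmissible A f j) {k l : ℕ} (hk : k ≤ j) (hl : l ≤ j)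
    (he : f k = f l) : k = l := by
  by_contra hne
  rcases Nat.lt_or_gt_of_ne hne with hlt | hlt
  · obtain ⟨l', rfl⟩ : ∃ l', l = l' + 1 := ⟨l - 1, by omega⟩
    exact hf.2 l' (by omega) (he ▸ mem_visitedAlong (by omega))
  · obtain ⟨k', rfl⟩ : ∃ k', k = k' + 1 := ⟨k - 1, by omega⟩
    exact hf.2 k' (by omega) (he.symm ▸ mem_visitedAlong (by omega))

lemma IsAdmissible.congr (h : ∀ k ≤ j, f k = f' k) (hf : IsAdmissible A f j) :
    IsAdmissible A f' j := by
  refine ⟨h 0 (Nat.zero_le _) ▸ hf.1, fun i hi => ?_⟩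
  rw [← visitedAlong_congr fun k hk => h k (by omega), ← h (i + 1) hi]
  exact hf.2 i hi

lemma IsAdmissible.succ (hf : IsAdmissible A f j) (hnext : f (j + 1) ∉ visitedAlong A f j) :
    IsAdmissible A f (j + 1) :=
  ⟨hf.1, fun i hi => (Nat.lt_succ_iff_lt_or_eq.mp hi).elim (hf.2 i) fun h => h ▸ hnext⟩

lemma follows_zero (hf : (f 0 : ℕ) = 0) : Follows A f 0 X := by
  intro i hi
  obtain rfl : i = 0 := by omega
  have hn : 0 < n := (f 0).pos
  rw [visitedAlong_zero, show f 0 = ⟨0, hn⟩ from Fin.ext hf]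
  simp [greedyWalk, hn]

lemma Follows.succ (hf : Follows A f j X)
    (hnext : nextV X (f j) (visitedAlong A f j) = some (f (j + 1))) : Follows A f (j + 1) X := by
  intro i hi
  rcases Nat.lt_succ_iff_lt_or_eq.mp (Nat.lt_succ_of_le hi) with hi | rfl
  · exact hf i (by omega)
  · exact greedyWalk_succ_eq_some_iff.mpr ⟨_, hf j le_rfl, hnext, visitedAlong_succ⟩

lemma follows_of_nextV (hf : (f 0 : ℕ) = 0)
    (h : ∀ i < j, nextV X (f i) (visitedAlong A f i) = some (f (i + 1))) : Follows A f j X := by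
  induction j with
  | zero => exact follows_zero hf
  | succ j ih => exact (ih fun i hi => h i (by omega)).succ (h j (by omega))

lemma Follows.nextV (hf : Follows A f j X) (hi : i < j) :
    nextV X (f i) (visitedAlong A f i) = some (f (i + 1)) := by
  obtain ⟨st, hst, hnext, -⟩ := greedyWalk_succ_eq_some_iff.mp (hf (i + 1) hi)
  obtain rfl := Option.some_inj.mp ((hf i hi.le).symm.trans hst)
  exact hnext

lemma Follows.congr (h : ∀ k ≤ j, f k = f' k) (hf : Follows A f j X) : Follows A f' j X :=
  fun i hi => by
    rw [← visitedAlong_congr fun k hk => h k (by omega), ← h i hi]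
    exact hf i hi

lemma Follows.apply_eq (hf : Follows A f j X) (hf' : Follows A f' j X) (hi : i ≤ j) :
    f i = f' i :=
  congrArg Prod.fst (Option.some_inj.mp ((hf i hi).symm.trans (hf' i hi)))

lemma exists_follows_of_greedyWalk_eq_some {st : Fin n × Finset (Fin n)}
    (h : greedyWalk A X j = some st) :
    ∃ f : ℕ → Fin n, Follows A f j X ∧ IsAdmissible A f j ∧ f j = st.1 ∧
      visitedAlong A f j = st.2 := by
  induction j generalizing st with
  | zero =>
    have hn : 0 < n := by
      by_contra hn
      simp [greedyWalk, hn] at h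
    simp only [greedyWalk, hn, dif_pos, Option.some_inj] at h
    refine ⟨fun _ => ⟨0, hn⟩, follows_zero rfl, ⟨rfl, by omega⟩, by rw [← h], ?_⟩
    rw [visitedAlong_zero, ← h]
  | succ j ih =>
    obtain ⟨st₀, hst₀, hnext, hins⟩ := greedyWalk_succ_eq_some_iff.mp h
    obtain ⟨f, hfol, hadm, hcur, hvis⟩ := ih hst₀
    set f' := Function.update f (j + 1) st.1
    have hagree : ∀ k ≤ j, f k = f' k := fun k hk =>
      (Function.update_of_ne (by omega) _ _).symm
    have hlast : f' (j + 1) = st.1 := Function.update_self ..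
    have hvis' : visitedAlong A f' j = st₀.2 := (visitedAlong_congr hagree).symm.trans hvis
    have hcur' : f' j = st₀.1 := (hagree j le_rfl).symm.trans hcur
    refine ⟨f', (hfol.congr hagree).succ ?_, (hadm.congr hagree).succ ?_, hlast, ?_⟩
    · rwa [hlast, hcur', hvis']
    · rw [hlast, hvis']
      exact (nextV_eq_some_iff.mp hnext).1
    · rw [visitedAlong_succ, hvis', hlast, hins]

end Trajectory

end GreedyWalk

section FollowConstraint

open Finset

variable {n : ℕ} {A : Finset (Fin n)} {f : ℕ → Fin n} {i j : ℕ}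

noncomputable def followConstraint (A : Finset (Fin n)) (f : ℕ → Fin n) (j : ℕ) :
    Sym2 (Fin n) → Option Bool := fun e =>
  if ∃ i < j, e = s(f i, f (i + 1)) then some true
  else if ∃ i < j, ∃ t ∉ visitedAlong A f i, t < f (i + 1) ∧ e = s(f i, t) then some false
  else none

lemma IsAdmissible.step_ne_skip (hf : IsAdmissible A f j) {i' : ℕ} (hi : i < j) (hi' : i' < j)
    {t : Fin n} (ht : t ∉ visitedAlong A f i) (hlt : t < f (i + 1)) :
    s(f i', f (i' + 1)) ≠ s(f i, t) := by
  intro he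
  rcases Sym2.eq_iff.mp he with ⟨h1, h2⟩ | ⟨h1, h2⟩
  · obtain rfl := hf.eq_of_apply_eq hi'.le hi.le h1
    exact lt_irrefl _ (h2 ▸ hlt)
  · obtain rfl := hf.eq_of_apply_eq (by omega) hi.le h2
    exact ht (h1 ▸ mem_visitedAlong (by omega))

lemma follows_iff_satisfies (hf : IsAdmissible A f j) {X : Sym2 (Fin n) → Bool} :
    Follows A f j X ↔ Satisfies (followConstraint A f j) X := by
  constructor
  · intro hfol e b hb
    unfold followConstraint at hb
    split_ifs at hb with hstep hskip <;> obtain rfl := Option.some_inj.mp hb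
    · obtain ⟨i, hi, rfl⟩ := hstep
      exact (nextV_eq_some_iff.mp (hfol.nextV hi)).2.1
    · obtain ⟨i, hi, t, ht, hlt, rfl⟩ := hskip
      exact (nextV_eq_some_iff.mp (hfol.nextV hi)).2.2 t ht hlt
  · refine fun hsat => follows_of_nextV hf.1 fun i hi =>
      nextV_eq_some_iff.mpr ⟨hf.2 i hi, hsat _ _ (if_pos ⟨i, hi, rfl⟩), fun t ht hlt => ?_⟩
    refine hsat _ _ ?_
    rw [followConstraint, if_neg, if_pos ⟨i, hi, t, ht, hlt, rfl⟩]
    rintro ⟨i', hi', he⟩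
    exact hf.step_ne_skip hi hi' ht hlt he.symm

lemma followConstraint_eq_none_of_not_mem (hf : IsAdmissible A f j) {u : Fin n}
    (hu : u ∉ visitedAlong A f j) : followConstraint A f j s(f j, u) = none := by
  have hpath : ∀ k ≤ j, f k ≠ u := fun k hk h => hu (h ▸ mem_visitedAlong hk)
  rw [followConstraint, if_neg, if_neg]
  · rintro ⟨i, hi, t, -, -, he⟩
    rcases Sym2.eq_iff.mp he with ⟨h1, -⟩ | ⟨-, h2⟩
    · exact absurd (hf.eq_of_apply_eq le_rfl hi.le h1) (by omega)
    · exact hpath i hi.le h2.symm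
  · rintro ⟨i, hi, he⟩
    rcases Sym2.eq_iff.mp he with ⟨-, h2⟩ | ⟨-, h2⟩
    · exact hpath (i + 1) hi h2.symm
    · exact hpath i hi.le h2.symm

lemma IsAdmissible.apply_ne (hf : IsAdmissible A f j) {v : Fin n} (hv : v ∈ A) (hv0 : (v : ℕ) ≠ 0)
    {k : ℕ} (hk : k ≤ j) : f k ≠ v := by
  rintro rfl
  rcases k with _ | k
  · exact hv0 hf.1
  · exact hf.2 k hk (mem_union_left _ hv)

lemma followConstraint_eq_none_of_mem (hf : IsAdmissible A f j) {v : Fin n} (hv : v ∈ A)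
    (hv0 : (v : ℕ) ≠ 0) : followConstraint A f j s(f i, v) = none := by
  rw [followConstraint, if_neg, if_neg]
  · rintro ⟨i', hi', t, ht, -, he⟩
    rcases Sym2.eq_iff.mp he with ⟨-, h2⟩ | ⟨-, h2⟩
    · exact ht (h2 ▸ mem_union_left _ hv)
    · exact hf.apply_ne hv hv0 hi'.le h2.symm
  · rintro ⟨i', hi', he⟩
    rcases Sym2.eq_iff.mp he with ⟨-, h2⟩ | ⟨-, h2⟩
    · exact hf.apply_ne hv hv0 hi' h2.symm
    · exact hf.apply_ne hv hv0 hi'.le h2.symm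

end FollowConstraint

section WalkBounds

open Finset

variable {n : ℕ} {p : ℝ} {A : Finset (Fin n)} {X : Sym2 (Fin n) → Bool} {j : ℕ}

def padLast (j : ℕ) (g : Fin (j + 1) → Fin n) : ℕ → Fin n :=
  fun i => g ⟨min i j, by omega⟩

lemma padLast_restrict (f : ℕ → Fin n) {i : ℕ} (hi : i ≤ j) :
    padLast j (fun k : Fin (j + 1) => f k) i = f i := by
  simp [padLast, min_eq_left hi]

lemma padLast_injective {g g' : Fin (j + 1) → Fin n}
    (h : ∀ i ≤ j, padLast j g i = padLast j g' i) : g = g' := by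
  funext k
  simpa [padLast, min_eq_left (Nat.lt_succ_iff.mp k.2)] using h k (Nat.lt_succ_iff.mp k.2)

lemma exists_padLast_of_greedyWalk_eq_some {st : Fin n × Finset (Fin n)}
    (h : greedyWalk A X j = some st) :
    ∃ g : Fin (j + 1) → Fin n, Follows A (padLast j g) j X ∧ IsAdmissible A (padLast j g) j ∧
      padLast j g j = st.1 ∧ visitedAlong A (padLast j g) j = st.2 := by
  obtain ⟨f, hfol, hadm, hcur, hvis⟩ := exists_follows_of_greedyWalk_eq_some h
  have hagree : ∀ i ≤ j, f i = padLast j (fun k : Fin (j + 1) => f k) i :=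
    fun i hi => (padLast_restrict f hi).symm
  exact ⟨_, hfol.congr hagree, hadm.congr hagree, by rw [← hagree j le_rfl, hcur],
    by rw [← visitedAlong_congr hagree, hvis]⟩

/-- Principle of deferred decisions: the walk along `f` never inspects the edges `D f`, so
requiring them to be absent costs an independent factor `(1 - p) ^ #(D f)`. -/
lemma bP_le_of_absent_along (hp0 : 0 ≤ p) (hp1 : p ≤ 1) {k : ℕ}
    {E : (Sym2 (Fin n) → Bool) → Prop} (D : (ℕ → Fin n) → Finset (Sym2 (Fin n)))
    (hE : ∀ X, E X → ∃ g : Fin (j + 1) → Fin n, IsAdmissible A (padLast j g) j ∧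
      Follows A (padLast j g) j X ∧ ∀ e ∈ D (padLast j g), X e = false)
    (hD : ∀ f, IsAdmissible A f j →
      k ≤ #(D f) ∧ ∀ e ∈ D f, ¬ e.IsDiag ∧ followConstraint A f j e = none) :
    bP n p E ≤ (1 - p) ^ k := by
  refine (bP_mono hp0 hp1 fun X hX => ?_).trans (bP_exists_le_of_exclusive hp0 hp1
    (pow_nonneg (by linarith) k) (univ.filter fun g => IsAdmissible A (padLast j g) j)
    (fun g => Follows A (padLast j g) j) (fun g X => ∀ e ∈ D (padLast j g), X e = false)
    (fun X g _ g' _ hf hf' => padLast_injective fun i hi => hf.apply_eq hf' hi) fun g hg => ?_)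
  · obtain ⟨g, hadm, hfol, habs⟩ := hE X hX
    exact ⟨g, mem_filter.mpr ⟨mem_univ g, hadm⟩, hfol, habs⟩
  · have hadm := (mem_filter.mp hg).2
    obtain ⟨hk, hDe⟩ := hD _ hadm
    have hsat : Follows A (padLast j g) j = Satisfies (followConstraint A (padLast j g) j) :=
      funext fun X => propext (follows_iff_satisfies hadm)
    rw [hsat, bP_satisfies_and_absent _ hDe, mul_comm]
    exact mul_le_mul_of_nonneg_right
      (pow_le_pow_of_le_one (sub_nonneg.2 hp1) (sub_le_self 1 hp0) hk) (bP_nonneg hp0 hp1 _)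

end WalkBounds

section StuckAndSkipped

open Finset

variable {n : ℕ} {p : ℝ} {X : Sym2 (Fin n) → Bool} {f : ℕ → Fin n} {j : ℕ}

lemma bP_stuck_le (hp0 : 0 ≤ p) (hp1 : p ≤ 1) (j : ℕ) :
    bP n p (fun X => ∃ st, greedyWalk ∅ X j = some st ∧ nextV X st.1 st.2 = none) ≤
      (1 - p) ^ (n - (j + 1)) := by
  refine bP_le_of_absent_along (A := ∅) (j := j) hp0 hp1
    (fun f => (univ \ visitedAlong ∅ f j).image fun u => s(f j, u)) ?_ fun f hf => ⟨?_, ?_⟩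
  · rintro X ⟨st, hst, hstuck⟩
    obtain ⟨g, hfol, hadm, hcur, hvis⟩ := exists_padLast_of_greedyWalk_eq_some hst
    refine ⟨g, hadm, hfol, ?_⟩
    simp only [mem_image, Finset.mem_sdiff, mem_univ, true_and, hvis, hcur]
    rintro _ ⟨u, hu, rfl⟩
    exact nextV_eq_none_iff.mp hstuck u hu
  · rw [card_image_of_injective _ fun _ _ => Sym2.congr_right.mp, card_univ_sdiff, Fintype.card_fin]
    exact Nat.sub_le_sub_left card_visitedAlong_empty_le n
  · simp only [mem_image, Finset.mem_sdiff, mem_univ, true_and]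
    rintro _ ⟨u, hu, rfl⟩
    refine ⟨fun hdiag => hu ?_, followConstraint_eq_none_of_not_mem hf hu⟩
    rw [← Sym2.mk_isDiag_iff.mp hdiag]
    exact mem_visitedAlong le_rfl

/-- At most `v - 1` steps land on a label below `v`: the labels `1, …, v - 1`. -/
lemma IsAdmissible.le_card_filter_lt {v : Fin n} (hf : IsAdmissible {v} f j) (hv0 : (v : ℕ) ≠ 0) :
    j + 1 - v ≤ #((range j).filter fun i => v < f (i + 1)) := by
  have hsmall : #((range j).filter fun i => ¬ v < f (i + 1)) ≤ #(Ico 1 (v : ℕ)) := by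
    refine card_le_card_of_injOn (fun i => (f (i + 1) : ℕ)) (fun i hi => ?_)
      fun a ha b hb hab => ?_
    · simp only [coe_filter, mem_range, not_lt, Set.mem_ofPred_eq] at hi
      have hne : f (i + 1) ≠ v := hf.apply_ne (mem_singleton_self v) hv0 hi.1
      have hpos : (f (i + 1) : ℕ) ≠ 0 := fun h =>
        absurd (hf.eq_of_apply_eq hi.1 (Nat.zero_le j) (Fin.ext (h.trans hf.1.symm))) (by omega)
      simp only [coe_Ico, Set.mem_Ico]
      exact ⟨Nat.pos_of_ne_zero hpos, lt_of_le_of_ne hi.2 (Fin.val_ne_of_ne hne)⟩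
    · simp only [coe_filter, mem_range, Set.mem_ofPred_eq] at ha hb
      have := hf.eq_of_apply_eq ha.1 hb.1 (Fin.ext hab)
      omega
  have hsplit := card_filter_add_card_filter_not (s := range j) (p := fun i => v < f (i + 1))
  rw [Nat.card_Ico, card_range] at *
  omega

lemma follows_insert_of_not_mem {v : Fin n} (hfol : Follows ∅ f j X) (hf : IsAdmissible ∅ f j)
    (hv : v ∉ visitedAlong ∅ f j) : Follows {v} f j X ∧ IsAdmissible {v} f j := by
  have hvf : ∀ i ≤ j, f i ≠ v := fun i hi h => hv (h ▸ mem_visitedAlong hi)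
  refine ⟨follows_of_nextV hf.1 fun i hi => ?_, hf.1, fun i hi => ?_⟩
  · rw [← insert_empty_eq, visitedAlong_insert]
    exact nextV_insert_of_ne (hfol.nextV hi) (hvf (i + 1) hi).symm
  · rw [← insert_empty_eq, visitedAlong_insert, mem_insert, not_or]
    exact ⟨hvf (i + 1) hi, hf.2 i hi⟩

lemma bP_not_mem_visited_le (hp0 : 0 ≤ p) (hp1 : p ≤ 1) (j : ℕ) {v : Fin n}
    (hv0 : (v : ℕ) ≠ 0) :
    bP n p (fun X => ∃ st, greedyWalk ∅ X j = some st ∧ v ∉ st.2) ≤ (1 - p) ^ (j + 1 - v) := by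
  refine bP_le_of_absent_along (A := {v}) (j := j) hp0 hp1
    (fun f => ((range j).filter fun i => v < f (i + 1)).image fun i => s(f i, v)) ?_
    fun f hf => ⟨?_, ?_⟩
  · rintro X ⟨st, hst, hvst⟩
    obtain ⟨g, hfol, hadm, -, hvis⟩ := exists_padLast_of_greedyWalk_eq_some hst
    have hv : v ∉ visitedAlong ∅ (padLast j g) j := hvis ▸ hvst
    obtain ⟨hfol', hadm'⟩ := follows_insert_of_not_mem hfol hadm hv
    refine ⟨g, hadm', hfol', ?_⟩
    simp only [mem_image, mem_filter, mem_range]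
    rintro _ ⟨i, ⟨hi, hlt⟩, rfl⟩
    exact (nextV_eq_some_iff.mp (hfol.nextV hi)).2.2 v
      (fun h => hv (visitedAlong_mono hi.le h)) hlt
  · refine (hf.le_card_filter_lt hv0).trans_eq (card_image_of_injOn fun a ha b hb hab => ?_).symm
    simp only [coe_filter, mem_range, Set.mem_ofPred_eq] at ha hb
    exact hf.eq_of_apply_eq ha.1.le hb.1.le (Sym2.congr_left.mp hab)
  · simp only [mem_image, mem_filter, mem_range]
    rintro _ ⟨i, ⟨hi, -⟩, rfl⟩
    exact ⟨fun hdiag => hf.apply_ne (mem_singleton_self v) hv0 hi.le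
      (Sym2.mk_isDiag_iff.mp hdiag), followConstraint_eq_none_of_mem hf (mem_singleton_self v) hv0⟩

end StuckAndSkipped

section StoppedWalk

open Finset

variable {n : ℕ} {p : ℝ}

lemma bP_gstate_eq_none_le (hp0 : 0 ≤ p) (hp1 : p ≤ 1) (hn : 0 < n) (j : ℕ) :
    bP n p (fun X => gstate X j = none) ≤ j * (1 - p) ^ (n - j) :=
  calc _ ≤ ∑ i ∈ range j,
        bP n p (fun X => ∃ st, greedyWalk ∅ X i = some st ∧ nextV X st.1 st.2 = none) := by
        refine bP_le_sum hp0 hp1 _ _ fun X hX => ?_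
        rw [gstate_eq_greedyWalk] at hX
        obtain ⟨i, hi, h⟩ := exists_nextV_eq_none_of_greedyWalk_eq_none hn hX
        exact ⟨i, mem_range.mpr hi, h⟩
    _ ≤ ∑ i ∈ range j, (1 - p) ^ (n - j) := sum_le_sum fun i hi =>
        (bP_stuck_le hp0 hp1 i).trans <| pow_le_pow_of_le_one (sub_nonneg.2 hp1)
          (sub_le_self 1 hp0) (by rw [mem_range] at hi; omega)
    _ = j * (1 - p) ^ (n - j) := by simp

lemma zero_mem_of_greedyWalk_eq_some {A : Finset (Fin n)} {X : Sym2 (Fin n) → Bool} {j : ℕ}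
    {st : Fin n × Finset (Fin n)} (h : greedyWalk A X j = some st) {v : Fin n}
    (hv : (v : ℕ) = 0) : v ∈ st.2 := by
  obtain ⟨f, -, hf, -, hvis⟩ := exists_follows_of_greedyWalk_eq_some h
  rw [← hvis, show v = f 0 from Fin.ext (hv.trans hf.1.symm)]
  exact mem_visitedAlong (Nat.zero_le j)

lemma bP_exists_not_mem_visited_le (hp0 : 0 ≤ p) (hp1 : p ≤ 1) (j : ℕ) (P : Fin n → Prop) :
    bP n p (fun X => ∃ st, gstate X j = some st ∧ ∃ v ∉ st.2, P v) ≤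
      ∑ v ∈ univ.filter P, (1 - p) ^ (j + 1 - v) :=
  calc _ ≤ ∑ v ∈ univ.filter (fun v : Fin n => P v ∧ (v : ℕ) ≠ 0),
        bP n p (fun X => ∃ st, greedyWalk ∅ X j = some st ∧ v ∉ st.2) := by
        refine bP_le_sum hp0 hp1 _ _ fun X ⟨st, hst, v, hv, hP⟩ => ?_
        rw [gstate_eq_greedyWalk] at hst
        exact ⟨v, mem_filter.mpr
          ⟨mem_univ v, hP, fun h => hv (zero_mem_of_greedyWalk_eq_some hst h)⟩, st, hst, hv⟩
    _ ≤ ∑ v ∈ univ.filter (fun v : Fin n => P v ∧ (v : ℕ) ≠ 0), (1 - p) ^ (j + 1 - v) :=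
        sum_le_sum fun v hv => bP_not_mem_visited_le hp0 hp1 j (mem_filter.mp hv).2.2
    _ ≤ ∑ v ∈ univ.filter P, (1 - p) ^ (j + 1 - v) :=
        sum_le_sum_of_subset_of_nonneg
          (fun v hv => mem_filter.mpr ⟨mem_univ v, (mem_filter.mp hv).2.1⟩)
          fun _ _ _ => pow_nonneg (sub_nonneg.2 hp1) _

end StoppedWalk

section Inversions

open Finset

variable {n : ℕ}

lemma alphaInv_le (σ : Equiv.Perm (Fin n)) {v k : Fin n} (hv : ∀ l, k < l → v ≤ σ l) :
    alphaInv σ k ≤ n - (v + 1) :=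
  calc alphaInv σ k ≤ #(Ico (v : ℕ) (σ k)) := by
        refine card_le_card_of_injOn (fun l => (σ l : ℕ)) (fun l hl => ?_)
          fun a _ b _ h => σ.injective (Fin.ext h)
        simp only [coe_filter, mem_univ, true_and, Set.mem_ofPred_eq] at hl
        simpa using ⟨hv l hl.1, hl.2⟩
    _ ≤ n - (v + 1) := by rw [Nat.card_Ico]; omega

lemma iotaInv_le_of_le_apply (σ : Equiv.Perm (Fin n)) {m : ℕ} {v : Fin n}
    (hv : ∀ k : Fin n, n - m ≤ k → v ≤ σ k) :
    (iotaInv σ : ℝ) ≤ ∑ j ∈ univ.filter (fun j : Fin n => (j : ℕ) < n - m), (alphaInv σ j : ℝ) +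
      m * ((n : ℝ) - ((v : ℕ) + 1)) := by
  have htail : #(univ.filter fun j : Fin n => ¬ (j : ℕ) < n - m) ≤ m := by
    calc _ ≤ #(Ico (n - m) n) := card_le_card_of_injOn Fin.val (fun k hk => by
            simp only [coe_filter, mem_univ, true_and, Set.mem_ofPred_eq] at hk
            simp only [coe_Ico, Set.mem_Ico]
            exact ⟨not_lt.mp hk, k.2⟩) Fin.val_injective.injOn
      _ ≤ m := by rw [Nat.card_Ico]; omega
  have hgap : ((n - (v + 1) : ℕ) : ℝ) = (n : ℝ) - ((v : ℕ) + 1) := by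
    rw [Nat.cast_sub (Nat.succ_le_of_lt v.2)]; push_cast; ring
  rw [iotaInv, Nat.cast_sum, ← sum_filter_add_sum_filter_not _ fun j : Fin n => (j : ℕ) < n - m]
  gcongr
  calc _ ≤ #(univ.filter fun j : Fin n => ¬ (j : ℕ) < n - m) • ((n - (v + 1) : ℕ) : ℝ) :=
        sum_le_card_nsmul _ _ _ fun k hk => Nat.cast_le.mpr <| alphaInv_le σ fun l hl =>
          hv l (by simp only [mem_filter, mem_univ, true_and, not_lt] at hk; omega)
    _ ≤ m * ((n : ℝ) - ((v : ℕ) + 1)) := by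
        rw [nsmul_eq_mul, hgap]
        exact mul_le_mul_of_nonneg_right (by exact_mod_cast htail) (hgap ▸ Nat.cast_nonneg _)

end Inversions

section MainEvent

open Finset

variable {n : ℕ}

/-- The event of `stmt_18` for the walk stopped with `m` unvisited vertices and the lower
bound `r` on `j₁`. -/
def GoodStop (n m : ℕ) (r : ℝ) (X : Sym2 (Fin n) → Bool) : Prop :=
  ∃ st : Fin n × Finset (Fin n),
    gstate X (n - m - 1) = some st ∧
    ∃ hU : (Finset.univ \ st.2).Nonempty,
      r ≤ (((Finset.univ \ st.2).min' hU : Fin n) : ℕ) + 1 ∧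
      ∀ σ : Equiv.Perm (Fin n),
        (∀ i : ℕ, (hi : i < n - m) →
          ∀ st' : Fin n × Finset (Fin n), gstate X i = some st' →
            σ ⟨i, Nat.lt_of_lt_of_le hi (Nat.sub_le n _)⟩ = st'.1) →
        (iotaInv σ : ℝ) ≤
          (∑ j ∈ Finset.univ.filter (fun j : Fin n => (j : ℕ) < n - m), (alphaInv σ j : ℝ)) +
          (m : ℝ) * ((n : ℝ) - ((((Finset.univ \ st.2).min' hU : Fin n) : ℕ) + 1))

/-- Any permutation extending the walk puts the unvisited vertices, all of label at least `j₁`,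
in the last `m` positions. -/
lemma goodStop_of_forall_not_mem {m : ℕ} (hm0 : 0 < m) (hmn : m < n) {r : ℝ}
    {X : Sym2 (Fin n) → Bool} {st : Fin n × Finset (Fin n)}
    (hst : gstate X (n - m - 1) = some st) (hr : ∀ v ∉ st.2, r ≤ (v : ℕ) + 1) :
    GoodStop n m r X := by
  obtain ⟨f, hfol, -, -, hvis⟩ :=
    exists_follows_of_greedyWalk_eq_some ((gstate_eq_greedyWalk _).symm.trans hst)
  have hU : (univ \ st.2).Nonempty := by
    rw [← card_pos, card_univ_sdiff, Fintype.card_fin, ← hvis]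
    have := card_visitedAlong_empty_le (f := f) (i := n - m - 1)
    omega
  have hmin := mem_sdiff.mp (min'_mem _ hU)
  refine ⟨st, hst, hU, hr _ hmin.2, fun σ hσ => iotaInv_le_of_le_apply σ fun k hk =>
    min'_le _ _ (mem_sdiff.mpr ⟨mem_univ _, fun hk' => ?_⟩)⟩
  rw [← hvis, visitedAlong, empty_union, mem_image] at hk'
  obtain ⟨i, hi, hik⟩ := hk'
  rw [mem_range] at hi
  have hσi := hσ i (by omega) _ ((gstate_eq_greedyWalk i).trans (hfol i (by omega)))
  have := congrArg Fin.val (σ.injective (hσi.trans hik))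
  simp only at this
  omega

end MainEvent

section Asymptotics

open Finset

variable {n : ℕ} {p : ℝ}

lemma one_sub_pow_le_one_div_sq {x : ℝ} (hp1 : p ≤ 1) (hx : 0 < x) {k : ℕ}
    (hk : 2 * Real.log x ≤ p * k) : (1 - p) ^ k ≤ 1 / x ^ 2 :=
  calc (1 - p) ^ k ≤ Real.exp (-p) ^ k :=
        pow_le_pow_left₀ (sub_nonneg.2 hp1) (Real.one_sub_le_exp_neg p) k
    _ = Real.exp (-(p * k)) := by rw [← Real.exp_nat_mul]; ring_nf
    _ ≤ Real.exp (-Real.log (x ^ 2)) := by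
        rw [Real.log_pow]
        exact Real.exp_le_exp.mpr (by push_cast; linarith)
    _ = 1 / x ^ 2 := by rw [Real.exp_neg, Real.exp_log (by positivity), one_div]

lemma natCast_mul_one_div_sq_le {k : ℕ} (hk : k ≤ n) :
    (k : ℝ) * (1 / (n : ℝ) ^ 2) ≤ 1 / (n : ℝ) := by
  rcases Nat.eq_zero_or_pos n with rfl | hn
  · simp
  calc (k : ℝ) * (1 / (n : ℝ) ^ 2) ≤ n * (1 / (n : ℝ) ^ 2) := by gcongr
    _ = 1 / (n : ℝ) := by field_simp

lemma bP_gstate_eq_none_le_one_div (hp0 : 0 < p) (hp1 : p ≤ 1) {m : ℕ} (hmn : m < n)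
    (hm : 2 * Real.log n / p ≤ m) :
    bP n p (fun X => gstate X (n - m - 1) = none) ≤ 1 / n := by
  refine (bP_gstate_eq_none_le hp0.le hp1 (by omega) _).trans ?_
  refine (mul_le_mul_of_nonneg_left
    (one_sub_pow_le_one_div_sq hp1 (Nat.cast_pos.mpr (by omega)) ?_)
    (Nat.cast_nonneg _)).trans (natCast_mul_one_div_sq_le (by omega))
  rw [div_le_iff₀ hp0] at hm
  rw [show n - (n - m - 1) = m + 1 by omega]
  push_cast
  linarith

lemma bP_exists_not_mem_visited_lt_le_one_div (hp0 : 0 < p) (hp1 : p ≤ 1) {m : ℕ}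
    (hm : (m : ℝ) ≤ 2 * Real.log n / p + 1) :
    bP n p (fun X => ∃ st, gstate X (n - m - 1) = some st ∧
      ∃ v ∉ st.2, ((v : ℕ) : ℝ) + 1 < n - 4 * Real.log n / p) ≤ 1 / n := by
  refine (bP_exists_not_mem_visited_le hp0.le hp1 _ _).trans ?_
  refine (sum_le_card_nsmul _ _ (1 / (n : ℝ) ^ 2) fun v hv => ?_).trans ?_
  · have hv' : ((v : ℕ) : ℝ) + 1 < n - 4 * Real.log n / p := (mem_filter.mp hv).2
    have hlog : 0 ≤ 2 * Real.log n / p :=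
      div_nonneg (mul_nonneg two_pos.le (Real.log_natCast_nonneg n)) hp0.le
    have h4 : 4 * Real.log n / p = 2 * (2 * Real.log n / p) := by ring
    have hlt : m + v < n := by exact_mod_cast (show (m : ℝ) + v < n by linarith)
    refine one_sub_pow_le_one_div_sq hp1 (Nat.cast_pos.mpr v.pos) ?_
    rw [show n - m - 1 + 1 - v = n - (m + v) by omega, Nat.cast_sub hlt.le]
    have : 2 * Real.log n / p ≤ (n : ℝ) - ↑(m + v) := by push_cast; linarith
    rwa [div_le_iff₀' hp0] at this
  · rw [nsmul_eq_mul]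
    exact natCast_mul_one_div_sq_le ((card_le_univ _).trans_eq (Fintype.card_fin n))

lemma one_sub_two_div_le_bP_goodStop (hp0 : 0 < p) (hp1 : p < 1) (hn : 4 ≤ n)
    (hreg : 8 * Real.log n / p ≤ n) :
    1 - 2 / n ≤ bP n p (GoodStop n ⌈2 * Real.log n / p⌉₊ (n - 4 * Real.log n / p)) := by
  set m := ⌈2 * Real.log n / p⌉₊
  have hlog : 0 < 2 * Real.log n / p :=
    div_pos (mul_pos two_pos (Real.log_pos (by exact_mod_cast (by omega : 1 < n)))) hp0
  have hm_le : (m : ℝ) ≤ 2 * Real.log n / p + 1 := (Nat.ceil_lt_add_one hlog.le).le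
  have hmn : m < n := by
    have : (m : ℝ) < n := by
      have : (4 : ℝ) ≤ n := by exact_mod_cast hn
      linarith [show 2 * Real.log n / p = 8 * Real.log n / p / 4 by ring]
    exact_mod_cast this
  have hbad : ∀ X, ¬ GoodStop n m (n - 4 * Real.log n / p) X →
      gstate X (n - m - 1) = none ∨ ∃ st, gstate X (n - m - 1) = some st ∧
        ∃ v ∉ st.2, ((v : ℕ) : ℝ) + 1 < n - 4 * Real.log n / p := by
    intro X hX
    rcases hst : gstate X (n - m - 1) with _ | st
    · exact Or.inl rfl
    · refine Or.inr ⟨st, rfl, ?_⟩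
      by_contra! hr
      exact hX (goodStop_of_forall_not_mem (Nat.ceil_pos.mpr hlog) hmn hst hr)
  have hfail := (bP_mono hp0.le hp1.le hbad).trans (bP_or_le hp0.le hp1.le _ _)
  have hcompl := bP_add_bP_not (n := n) (p := p) (GoodStop n m (n - 4 * Real.log n / p))
  have hstuck := bP_gstate_eq_none_le_one_div hp0 hp1.le hmn (Nat.le_ceil _)
  have hskipped := bP_exists_not_mem_visited_lt_le_one_div hp0 hp1.le hm_le
  rw [show 2 / (n : ℝ) = 1 / n + 1 / n by ring]
  linarith

end Asymptotics

/-- If the greedy leftmost walk on `G(n, p₁)` is stopped when the set `U` of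
unvisited vertices has size `⌈2 log n / p₁⌉` (i.e. after `j₀ = n - |U|` vertices
are visited), then w.h.p.: the walk survives to that point, the smallest
(1-indexed) label `j₁` of a vertex of `U` satisfies `j₁ ≥ n - 4 log n / p₁`, and
every Hamilton cycle `σ` obtained by appending any Hamilton path through `U`
(i.e. agreeing with the walk in its first `j₀` positions) satisfies
`ι(σ) ≤ Σ_{j ≤ j₀} α_j(σ) + |U| (n - j₁)`. -/
theorem stmt_18 (p₁ : ℕ → ℝ) (hp0 : ∀ n, 0 < p₁ n) (hp1 : ∀ n, p₁ n < 1)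
    (hreg : ∀ᶠ n : ℕ in atTop, 8 * Real.log n / p₁ n ≤ n) :
    Tendsto (fun n =>
      bP n (p₁ n) (fun X =>
        ∃ st : Fin n × Finset (Fin n),
          gstate X (n - ⌈2 * Real.log n / p₁ n⌉₊ - 1) = some st ∧
          ∃ hU : (Finset.univ \ st.2).Nonempty,
            (n : ℝ) - 4 * Real.log n / p₁ n
                ≤ (((Finset.univ \ st.2).min' hU : Fin n) : ℕ) + 1 ∧
            ∀ σ : Equiv.Perm (Fin n),
              (∀ i : ℕ, (hi : i < n - ⌈2 * Real.log n / p₁ n⌉₊) →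
                ∀ st' : Fin n × Finset (Fin n), gstate X i = some st' →
                  σ ⟨i, Nat.lt_of_lt_of_le hi (Nat.sub_le n _)⟩ = st'.1) →
              (iotaInv σ : ℝ) ≤
                (∑ j ∈ Finset.univ.filter
                    (fun j : Fin n => (j : ℕ) < n - ⌈2 * Real.log n / p₁ n⌉₊),
                  (alphaInv σ j : ℝ)) +
                (⌈2 * Real.log n / p₁ n⌉₊ : ℝ) *
                  ((n : ℝ) - ((((Finset.univ \ st.2).min' hU : Fin n) : ℕ) + 1))))
      atTop (𝓝 1) := by
  have hlower : Tendsto (fun n : ℕ => 1 - 2 / (n : ℝ)) atTop (𝓝 1) := by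
    simpa using tendsto_const_nhds.sub (tendsto_const_div_atTop_nhds_zero_nat (2 : ℝ))
  refine tendsto_of_tendsto_of_tendsto_of_le_of_le' hlower tendsto_const_nhds ?_
    (Eventually.of_forall fun n => bP_le_one (hp0 n).le (hp1 n).le _)
  filter_upwards [hreg, eventually_ge_atTop 4] with n hregn hn
  exact one_sub_two_div_le_bP_goodStop (hp0 n) (hp1 n) hn hregn
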